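/- arXiv:2006.05607 — 2 statements merged into one kernel-verified Lean document; each statement's English description precedes it below -/
import Mathlib

section
/- Let k ≥ 2 be an integer and Q = T[H_1, ..., H_t] a digraph composition. Then every vertex of Q is a k-king of Q if and only if for each i ∈ [t], u_i is a k-king of T and at least one of the following holds: (i) every vertex of H_i is a k-king of H_i; (ii) |V(H_i)| ≥ 2 and u_i belongs to a directed cycle of T of length at most k. -/
/-- There is a directed walk (equivalently, path) of length at most `k` from `x` to `y`. -/
def KReach {V : Type*} (A : V → V → Prop) (k : ℕ) (x y : V) : Prop :=
  ∃ n : ℕ, n ≤ k ∧ ∃ f : ℕ → V, f 0 = x ∧ f n = y ∧ ∀ i < n, A (f i) (f (i + 1))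

/-- `x` is a `k`-king: it reaches every vertex by a path of length at most `k`. -/
def IsKKing {V : Type*} (A : V → V → Prop) (k : ℕ) (x : V) : Prop :=
  ∀ y : V, KReach A k x y

/-- A strict `k`-king: a `k`-king with some vertex at distance exactly `k`. -/
def IsStrictKKing {V : Type*} (A : V → V → Prop) (k : ℕ) (x : V) : Prop :=
  IsKKing A k x ∧ ∃ y : V, ¬ KReach A (k - 1) x y

/-- Strong connectivity of a digraph. -/
def Strong {V : Type*} (A : V → V → Prop) : Prop :=
  ∀ x y : V, ∃ k : ℕ, KReach A k x y

/-- Semicomplete digraph: at least one arc between any two distinct vertices. -/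
def Semicomplete {V : Type*} (A : V → V → Prop) : Prop :=
  ∀ x y : V, x ≠ y → A x y ∨ A y x

/-- Tournament: exactly one arc between any two distinct vertices, no loops. -/
def IsTournament {V : Type*} (A : V → V → Prop) : Prop :=
  Irreflexive A ∧ ∀ x y : V, x ≠ y → (A x y ↔ ¬ A y x)

/-- Out-degree of a vertex. -/
noncomputable def outDeg {V : Type*} (A : V → V → Prop) (x : V) : ℕ :=
  Set.ncard {y | A x y}

/-- There is a directed cycle of length exactly `k` through `x`. -/
def CycleThrough {V : Type*} (A : V → V → Prop) (k : ℕ) (x : V) : Prop :=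
  ∃ f : ℕ → V, f 0 = x ∧ f k = x ∧ (∀ i < k, A (f i) (f (i + 1))) ∧
    ∀ i j, i < k → j < k → f i = f j → i = j

/-- `x` belongs to a directed cycle of length at most `k`. -/
def OnShortCycle {V : Type*} (A : V → V → Prop) (k : ℕ) (x : V) : Prop :=
  ∃ n : ℕ, 2 ≤ n ∧ n ≤ k ∧ CycleThrough A n x

/-- `AQ` (on `W`) is the composition `T[H_1, …, H_t]` of digraphs over the digraph `AT`
(on index type `ι`), where the fiber of `π` over `i` is the vertex set of `H_i`
(each fiber is nonempty since `π` is surjective), the arcs of `H_i` are the arcs of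
`AQ` inside the fiber over `i`, and arcs between different fibers are determined by `AT`. -/
structure IsComposition {ι W : Type*} (AT : ι → ι → Prop) (AQ : W → W → Prop)
    (π : W → ι) : Prop where
  surj : Function.Surjective π
  cross : ∀ x y : W, π x ≠ π y → (AQ x y ↔ AT (π x) (π y))

/-- The digraph `H_i`: the induced subdigraph on the fiber of `π` over `i`. -/
def FiberArc {ι W : Type*} (AQ : W → W → Prop) (π : W → ι) (i : ι) :
    {w : W // π w = i} → {w : W // π w = i} → Prop :=
  fun a b => AQ a.1 b.1

/-- The induced subdigraph on the vertices satisfying `P`. -/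
def DelArc {V : Type*} (A : V → V → Prop) (P : V → Prop) :
    {v : V // P v} → {v : V // P v} → Prop :=
  fun a b => A a.1 b.1

/-- `{v}` is a `k`-absorbent set: every other vertex reaches `v` in at most `k` steps. -/
def SingletonAbsorbent {V : Type*} (A : V → V → Prop) (k : ℕ) (v : V) : Prop :=
  ∀ x : V, x ≠ v → KReach A k x v

/-- A quasi-kernel: an independent set `K` such that every vertex outside `K`
reaches some vertex of `K` by a path of length at most 2. -/
def QuasiKernel {V : Type*} (A : V → V → Prop) (K : Set V) : Prop :=
  (∀ x ∈ K, ∀ y ∈ K, x ≠ y → ¬ A x y) ∧ ∀ x ∉ K, ∃ y ∈ K, KReach A 2 x y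

/-- A `k`-kernel: a `k`-independent and `(k-1)`-absorbent set. -/
def KKernel {V : Type*} (A : V → V → Prop) (k : ℕ) (K : Set V) : Prop :=
  (∀ x ∈ K, ∀ y ∈ K, x ≠ y → ¬ KReach A (k - 1) x y) ∧
    ∀ x ∉ K, ∃ y ∈ K, KReach A (k - 1) x y

/-!
Walks in `Q` project under `π` to walks in `T` (arcs inside a fiber collapse to stalls, so
lengths only drop), and walks of positive length in `T` lift to `Q` between any chosen endpoints,
because an arc `u_i u_p` of `T` joins every vertex of `H_i` to every vertex of `H_p`. Hence
vertices in different fibers reach each other within `k` steps exactly when their indices do in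
`T`. Inside a fiber `H_i`, a vertex reaches another within `k` steps either inside `H_i` or along
a walk leaving `H_i`; the projection of the latter is a closed walk at `u_i` of length at most
`k`, which contains a cycle through `u_i` of length at most `k`. Conversely such a cycle lifts to
a walk between any two vertices of `H_i`.
-/

section Walks

variable {V : Type*} {A : V → V → Prop}

def DWalk (A : V → V → Prop) (n : ℕ) (x y : V) : Prop :=
  ∃ f : ℕ → V, f 0 = x ∧ f n = y ∧ ∀ i < n, A (f i) (f (i + 1))

theorem kReach_iff {k : ℕ} {x y : V} : KReach A k x y ↔ ∃ n ≤ k, DWalk A n x y := Iff.rfl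

theorem dWalk_zero_iff {x y : V} : DWalk A 0 x y ↔ x = y :=
  ⟨fun ⟨_, h0, h1, _⟩ => h0.symm.trans h1, fun h => ⟨fun _ => x, rfl, h, by simp⟩⟩

theorem kReach_refl (k : ℕ) (x : V) : KReach A k x x :=
  ⟨0, k.zero_le, dWalk_zero_iff.2 rfl⟩

theorem dWalk_succ_iff {n : ℕ} {x z : V} :
    DWalk A (n + 1) x z ↔ ∃ y, DWalk A n x y ∧ A y z := by
  constructor
  · rintro ⟨f, h0, hn, harc⟩
    exact ⟨f n, ⟨f, h0, rfl, fun i hi => harc i (by omega)⟩, hn ▸ harc n n.lt_succ_self⟩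
  · rintro ⟨y, ⟨f, h0, hn, harc⟩, hyz⟩
    refine ⟨fun i => if i ≤ n then f i else z, by simp [h0], by simp, fun i hi => ?_⟩
    rcases Nat.lt_or_ge i n with hi' | hi'
    · simpa [hi'.le, Nat.succ_le_of_lt hi'] using harc i hi'
    · obtain rfl : i = n := by omega
      simpa [hn] using hyz

theorem DWalk.pos_of_ne {n : ℕ} {x y : V} (h : DWalk A n x y) (hxy : x ≠ y) : 0 < n :=
  Nat.pos_of_ne_zero fun hn => hxy (dWalk_zero_iff.1 (hn ▸ h))

theorem DWalk.trans {m n : ℕ} {x y z : V} (h₁ : DWalk A m x y) (h₂ : DWalk A n y z) :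
    DWalk A (m + n) x z := by
  induction n generalizing z with
  | zero => rwa [← dWalk_zero_iff.1 h₂]
  | succ n ih =>
    obtain ⟨w, hw, hwz⟩ := dWalk_succ_iff.1 h₂
    exact dWalk_succ_iff.2 ⟨w, ih hw, hwz⟩

theorem DWalk.map {U : Type*} {B : U → U → Prop} (g : V → U)
    (hg : ∀ a b, A a b → B (g a) (g b)) {n : ℕ} {x y : V} (h : DWalk A n x y) :
    DWalk B n (g x) (g y) :=
  let ⟨f, h0, hn, harc⟩ := h
  ⟨g ∘ f, by simp [h0], by simp [hn], fun i hi => hg _ _ (harc i hi)⟩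

theorem dWalk_segment {n : ℕ} {f : ℕ → V} (harc : ∀ i < n, A (f i) (f (i + 1))) {a b : ℕ}
    (hab : a ≤ b) (hbn : b ≤ n) : DWalk A (b - a) (f a) (f b) :=
  ⟨fun i => f (a + i), rfl, by simp [Nat.add_sub_cancel' hab],
    fun i hi => harc (a + i) (by omega)⟩

theorem dWalk_delArc {P : V → Prop} {n : ℕ} {f : ℕ → V} {x y : Subtype P}
    (h0 : f 0 = x) (hn : f n = y) (harc : ∀ i < n, A (f i) (f (i + 1)))
    (hP : ∀ m ≤ n, P (f m)) : DWalk (DelArc A P) n x y := by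
  refine ⟨fun m => ⟨f (min m n), hP _ (min_le_right _ _)⟩, Subtype.ext (by simpa using h0),
    Subtype.ext (by simpa using hn), fun i hi => ?_⟩
  simpa [DelArc, hi.le, Nat.succ_le_of_lt hi] using harc i hi

theorem DWalk.exists_le_of_reflGen {n : ℕ} {x y : V} (h : DWalk (Relation.ReflGen A) n x y) :
    ∃ m ≤ n, DWalk A m x y := by
  induction n generalizing y with
  | zero => exact ⟨0, le_rfl, dWalk_zero_iff.2 (dWalk_zero_iff.1 h)⟩
  | succ n ih =>
    obtain ⟨w, hw, hwy⟩ := dWalk_succ_iff.1 h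
    obtain ⟨m, hm, hxw⟩ := ih hw
    rcases hwy with _ | hwy
    · exact ⟨m, by omega, hxw⟩
    · exact ⟨m + 1, by omega, dWalk_succ_iff.2 ⟨w, hxw, hwy⟩⟩

theorem DWalk.onShortCycle (hA : Irreflexive A) {k m : ℕ} {x : V} (h : DWalk A m x x)
    (hm : 0 < m) (hmk : m ≤ k) : OnShortCycle A k x := by
  induction m using Nat.strong_induction_on with
  | _ m ih =>
  obtain ⟨f, h0, hfm, harc⟩ := h
  by_cases hinj : ∀ a b, a < m → b < m → f a = f b → a = b
  · refine ⟨m, ?_, hmk, f, h0, hfm, harc, hinj⟩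
    by_contra! hlt
    obtain rfl : m = 1 := by omega
    have hloop := harc 0 hm
    rw [h0, zero_add, hfm] at hloop
    exact hA x hloop
  · push Not at hinj
    obtain ⟨a, b, ha, hb, hab, hne⟩ := hinj
    wlog hlt : a < b generalizing a b
    · exact this b a hb ha hab.symm hne.symm (by omega)
    -- cut out the closed subwalk from position `a` to position `b`
    have h₁ := dWalk_segment harc (Nat.zero_le a) ha.le
    have h₂ := dWalk_segment harc hb.le le_rfl
    rw [h0, Nat.sub_zero, hab] at h₁
    rw [hfm] at h₂
    exact ih _ (by omega) (h₁.trans h₂) (by omega) (by omega)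

end Walks

namespace IsComposition

variable {ι W : Type*} {AT : ι → ι → Prop} {AQ : W → W → Prop} {π : W → ι}

theorem reflGen_of_arc (hcomp : IsComposition AT AQ π) {v w : W} (h : AQ v w) :
    Relation.ReflGen AT (π v) (π w) := by
  by_cases hvw : π v = π w
  · rw [hvw]
  · exact .single ((hcomp.cross v w hvw).1 h)

theorem arc_of_arc (hcomp : IsComposition AT AQ π) (hT : Irreflexive AT) {v w : W}
    (h : AT (π v) (π w)) : AQ v w :=
  (hcomp.cross v w fun hvw => hT _ (hvw ▸ h)).2 h

theorem exists_dWalk_proj (hcomp : IsComposition AT AQ π) {n : ℕ} {v w : W}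
    (h : DWalk AQ n v w) : ∃ m ≤ n, DWalk AT m (π v) (π w) :=
  (h.map π fun _ _ => hcomp.reflGen_of_arc).exists_le_of_reflGen

theorem dWalk_lift (hcomp : IsComposition AT AQ π) (hT : Irreflexive AT) {n : ℕ} (hn : 0 < n)
    {v w : W} (h : DWalk AT n (π v) (π w)) : DWalk AQ n v w := by
  obtain ⟨n, rfl⟩ := Nat.exists_eq_succ_of_ne_zero hn.ne'
  induction n generalizing w with
  | zero =>
    obtain ⟨j, hj, hjw⟩ := dWalk_succ_iff.1 h
    rw [dWalk_zero_iff] at hj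
    subst hj
    exact dWalk_succ_iff.2 ⟨v, dWalk_zero_iff.2 rfl, hcomp.arc_of_arc hT hjw⟩
  | succ n ih =>
    obtain ⟨j, hj, hjw⟩ := dWalk_succ_iff.1 h
    obtain ⟨u, rfl⟩ := hcomp.surj j
    exact dWalk_succ_iff.2 ⟨u, ih n.succ_pos hj, hcomp.arc_of_arc hT hjw⟩

theorem isKKing_of_forall_isKKing (hcomp : IsComposition AT AQ π) {k : ℕ}
    (hall : ∀ v, IsKKing AQ k v) (i : ι) : IsKKing AT k i := by
  intro j
  obtain ⟨v, rfl⟩ := hcomp.surj i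
  obtain ⟨w, rfl⟩ := hcomp.surj j
  obtain ⟨n, hnk, h⟩ := kReach_iff.1 (hall v w)
  obtain ⟨m, hmn, h'⟩ := hcomp.exists_dWalk_proj h
  exact ⟨m, hmn.trans hnk, h'⟩

theorem onShortCycle_of_not_kReach_fiber (hcomp : IsComposition AT AQ π)
    (hT : Irreflexive AT) {k : ℕ} {i : ι} {v w : {x // π x = i}} (hQ : KReach AQ k v w)
    (hH : ¬ KReach (FiberArc AQ π i) k v w) : OnShortCycle AT k i := by
  obtain ⟨n, hnk, f, h0, hfn, harc⟩ := hQ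
  obtain ⟨m, hmn, hm⟩ : ∃ m ≤ n, π (f m) ≠ i := by
    by_contra! hstay
    exact hH ⟨n, hnk, dWalk_delArc h0 hfn harc hstay⟩
  obtain ⟨a, ha, hout⟩ := hcomp.exists_dWalk_proj (dWalk_segment harc (Nat.zero_le m) hmn)
  obtain ⟨b, hb, hback⟩ := hcomp.exists_dWalk_proj (dWalk_segment harc hmn le_rfl)
  rw [h0, v.2] at hout
  rw [hfn, w.2] at hback
  have hpos := hout.pos_of_ne hm.symm
  exact (hout.trans hback).onShortCycle hT (by omega) (by omega)

theorem isKKing_of_isKKing_proj (hcomp : IsComposition AT AQ π) (hT : Irreflexive AT)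
    {k : ℕ} {v : W} (hking : IsKKing AT k (π v))
    (hfiber : IsKKing (FiberArc AQ π (π v)) k ⟨v, rfl⟩ ∨ OnShortCycle AT k (π v)) :
    IsKKing AQ k v := by
  intro w
  by_cases hvw : π w = π v
  · rcases hfiber with hH | ⟨n, hn, hnk, f, h0, hfn, harc, -⟩
    · obtain ⟨n, hnk, h⟩ := kReach_iff.1 (hH ⟨w, hvw⟩)
      exact ⟨n, hnk, h.map Subtype.val fun _ _ => id⟩
    · refine ⟨n, hnk, hcomp.dWalk_lift hT (by omega) ?_⟩
      rw [hvw]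
      exact ⟨f, h0, hfn, harc⟩
  · obtain ⟨n, hnk, h⟩ := kReach_iff.1 (hking (π w))
    exact ⟨n, hnk, hcomp.dWalk_lift hT (h.pos_of_ne (Ne.symm hvw)) h⟩

end IsComposition

theorem stmt4_general {ι W : Type*} [Fintype W] (k : ℕ)
    (AT : ι → ι → Prop) (AQ : W → W → Prop) (π : W → ι)
    (hTirr : Irreflexive AT)
    (hcomp : IsComposition AT AQ π) :
    (∀ v : W, IsKKing AQ k v) ↔
      ∀ i : ι, IsKKing AT k i ∧
        ((∀ v : {w : W // π w = i}, IsKKing (FiberArc AQ π i) k v) ∨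
          (2 ≤ Nat.card {w : W // π w = i} ∧ OnShortCycle AT k i)) := by
  constructor
  · intro hall i
    refine ⟨hcomp.isKKing_of_forall_isKKing hall i, or_iff_not_imp_left.2 fun hH => ?_⟩
    simp only [IsKKing, not_forall] at hH
    obtain ⟨v, w, hvw⟩ := hH
    have hne : v ≠ w := by
      rintro rfl
      exact hvw (kReach_refl k v)
    exact ⟨Finite.one_lt_card_iff_nontrivial.2 ⟨v, w, hne⟩,
      hcomp.onShortCycle_of_not_kReach_fiber hTirr (hall v w) hvw⟩
  · intro h v
    obtain ⟨hking, hH | ⟨-, hcycle⟩⟩ := h (π v)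
    · exact hcomp.isKKing_of_isKKing_proj hTirr hking (.inl (hH _))
    · exact hcomp.isKKing_of_isKKing_proj hTirr hking (.inr hcycle)

/-- Characterization of digraph compositions all of whose vertices are `k`-kings. -/
theorem stmt4 {ι W : Type*} [Fintype ι] [Fintype W] (k : ℕ) (hk : 2 ≤ k)
    (AT : ι → ι → Prop) (AQ : W → W → Prop) (π : W → ι)
    (hcard : 2 ≤ Fintype.card ι)
    (hTirr : Irreflexive AT) (hQirr : Irreflexive AQ)
    (hcomp : IsComposition AT AQ π) :
    (∀ v : W, IsKKing AQ k v) ↔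
      ∀ i : ι, IsKKing AT k i ∧
        ((∀ v : {w : W // π w = i}, IsKKing (FiberArc AQ π i) k v) ∨
          (2 ≤ Nat.card {w : W // π w = i} ∧ OnShortCycle AT k i)) :=
  stmt4_general k AT AQ π hTirr hcomp
end

section
/- Let Q = T[H_1, ..., H_t] be a strongly connected semicomplete composition. Then every 3-king of Q is adjacent to every non-king of Q (i.e., there is at least one arc between them). -/
section KReach

variable {V : Type*} {A : V → V → Prop} {k : ℕ} {x y z : V}

theorem KReach.refl : KReach A k x x :=
  ⟨0, k.zero_le, fun _ => x, rfl, rfl, fun i hi => absurd hi (Nat.not_lt_zero i)⟩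

theorem kReach_zero_iff : KReach A 0 x y ↔ x = y := by
  constructor
  · rintro ⟨n, hn, f, rfl, rfl, -⟩
    rw [Nat.le_zero.mp hn]
  · rintro rfl
    exact KReach.refl

theorem kReach_succ_iff : KReach A (k + 1) x z ↔ x = z ∨ ∃ y, A x y ∧ KReach A k y z := by
  constructor
  · rintro ⟨n, hn, f, rfl, rfl, hf⟩
    cases n with
    | zero => exact Or.inl rfl
    | succ n =>
      exact Or.inr ⟨f 1, hf 0 n.succ_pos,
        n, by omega, fun i => f (i + 1), rfl, rfl, fun i hi => hf (i + 1) (by omega)⟩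
  · rintro (rfl | ⟨y, hxy, n, hn, g, rfl, rfl, hg⟩)
    · exact KReach.refl
    · refine ⟨n + 1, by omega, fun i => if i = 0 then x else g (i - 1), rfl, by simp, ?_⟩
      rintro (_ | i) hi
      · simpa using hxy
      · simpa using hg i (by omega)

theorem KReach.cons (hxy : A x y) (hyz : KReach A k y z) : KReach A (k + 1) x z :=
  kReach_succ_iff.mpr (Or.inr ⟨y, hxy, hyz⟩)

theorem KReach.mono {l : ℕ} (h : KReach A k x y) (hkl : k ≤ l) : KReach A l x y := by
  obtain ⟨n, hn, hf⟩ := h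
  exact ⟨n, hn.trans hkl, hf⟩

theorem KReach.exists_exit_arc {P : V → Prop} (h : KReach A k x y) (hx : P x) (hy : ¬ P y) :
    ∃ p q, P p ∧ ¬ P q ∧ A p q ∧ KReach A (k - 1) q y := by
  induction k generalizing x with
  | zero => exact absurd (kReach_zero_iff.mp h ▸ hx) hy
  | succ k ih =>
    obtain rfl | ⟨w, hxw, hwy⟩ := kReach_succ_iff.mp h
    · exact absurd hx hy
    by_cases hw : P w
    · obtain ⟨p, q, hp, hq, hpq, hqy⟩ := ih hwy hw
      exact ⟨p, q, hp, hq, hpq, hqy.mono (by omega)⟩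
    · exact ⟨x, w, hx, hw, hxw, hwy⟩

end KReach

namespace IsComposition

variable {ι W : Type*} {AT : ι → ι → Prop} {AQ : W → W → Prop} {π : W → ι}

theorem arc_left_congr (hcomp : IsComposition AT AQ π) {x x' w : W} (hxx' : π x = π x')
    (hw : π w ≠ π x) : AQ x w ↔ AQ x' w := by
  rw [hcomp.cross x w hw.symm, hcomp.cross x' w (hxx' ▸ hw.symm), hxx']

theorem kReach_of_fiber_eq (hcomp : IsComposition AT AQ π) {k : ℕ} {u v y : W}
    (huv : π u = π v) (hy : π y ≠ π v) (h : KReach AQ (k + 1) v y) :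
    KReach AQ (k + 1) u y := by
  obtain ⟨p, q, hp, hq, hpq, hqy⟩ := h.exists_exit_arc (P := fun w => π w = π v) rfl hy
  exact KReach.cons ((hcomp.arc_left_congr (huv.trans hp.symm) (huv ▸ hq)).mpr hpq) hqy

theorem kReach_three_within_fiber (hsemi : Semicomplete AT) (hcomp : IsComposition AT AQ π)
    (hstrong : Strong AQ) {u y z : W} (hz : π z ≠ π u) (hy : π y = π u) :
    KReach AQ 3 u y := by
  let IntoFiber : W → Prop := fun a => π a ≠ π u ∧ AT (π a) (π u)
  have into_arc {a : W} (ha : IntoFiber a) : AQ a y :=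
    (hcomp.cross a y (hy ▸ ha.1)).mpr (hy ▸ ha.2)
  obtain ⟨k, hzu⟩ := hstrong z u
  obtain ⟨a, b, ha, hb, hab, -⟩ :=
    hzu.exists_exit_arc (P := fun w => π w ≠ π u) hz (not_not.mpr rfl)
  rw [not_not] at hb
  have ha_into : IntoFiber a := ⟨ha, hb ▸ (hcomp.cross a b (hb ▸ ha)).mp hab⟩
  obtain ⟨l, hua⟩ := hstrong u a
  obtain ⟨p, q, hp, hq, hpq, -⟩ :=
    hua.exists_exit_arc (P := fun w => ¬ IntoFiber w) (fun h => h.1 rfl) (not_not.mpr ha_into)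
  rw [not_not] at hq
  by_cases hpu : π p = π u
  · have huq : AQ u q := (hcomp.arc_left_congr hpu (hpu ▸ hq.1)).mp hpq
    exact KReach.cons huq (KReach.cons (into_arc hq) KReach.refl)
  · have hup : AT (π u) (π p) :=
      (hsemi _ _ (Ne.symm hpu)).resolve_right fun h => hp ⟨hpu, h⟩
    exact KReach.cons ((hcomp.cross u p (Ne.symm hpu)).mpr hup)
      (KReach.cons hpq (KReach.cons (into_arc hq) KReach.refl))

theorem isKKing_three_of_fiber_eq (hsemi : Semicomplete AT) (hcomp : IsComposition AT AQ π)
    (hstrong : Strong AQ) {u v z : W} (hz : π z ≠ π u) (huv : π u = π v)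
    (hv : IsKKing AQ 3 v) : IsKKing AQ 3 u := by
  intro y
  by_cases hy : π y = π u
  · exact kReach_three_within_fiber hsemi hcomp hstrong hz hy
  · exact hcomp.kReach_of_fiber_eq huv (huv ▸ hy) (hv y)

end IsComposition

theorem stmt10_general {ι W : Type*} [Fintype ι]
    (AT : ι → ι → Prop) (AQ : W → W → Prop) (π : W → ι)
    (hcard : 2 ≤ Fintype.card ι)
    (hsemi : Semicomplete AT) (hcomp : IsComposition AT AQ π)
    (hstrong : Strong AQ) :
    ∀ v u : W, IsKKing AQ 3 v → ¬ IsKKing AQ 3 u → (AQ v u ∨ AQ u v) := by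
  intro v u hv hu
  have huv : π u ≠ π v := by
    intro huv
    obtain ⟨j, hj⟩ := Fintype.exists_ne_of_one_lt_card hcard (π u)
    obtain ⟨z, rfl⟩ := hcomp.surj j
    exact hu (hcomp.isKKing_three_of_fiber_eq hsemi hstrong hj huv hv)
  rcases hsemi (π v) (π u) huv.symm with h | h
  · exact Or.inl ((hcomp.cross v u huv.symm).mpr h)
  · exact Or.inr ((hcomp.cross u v huv).mpr h)

/-- In a strong semicomplete composition there is an arc between every 3-king
and every non-king. -/
theorem stmt10 {ι W : Type*} [Fintype ι] [Fintype W]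
    (AT : ι → ι → Prop) (AQ : W → W → Prop) (π : W → ι)
    (hcard : 2 ≤ Fintype.card ι)
    (hTirr : Irreflexive AT) (hQirr : Irreflexive AQ)
    (hsemi : Semicomplete AT) (hcomp : IsComposition AT AQ π)
    (hstrong : Strong AQ) :
    ∀ v u : W, IsKKing AQ 3 v → ¬ IsKKing AQ 3 u → (AQ v u ∨ AQ u v) :=
  stmt10_general AT AQ π hcard hsemi hcomp hstrong
end
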